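/- Let N ≥ 2 be an integer and p ≥ N (with p > 1). If k ≤ -(p+N-3)/(2p-3), then E_{p,N,k}[cos](θ) ≥ 0 for every θ ∈ (0, π/2) (u = r^k·cos(θ) is p-subharmonic in ℝ^N₊); and if k ∈ [-(N-1)/(p-1), 0), then E_{p,N,k}[cos](θ) ≤ 0 for every θ ∈ (0, π/2) (u = r^k·cos(θ) is p-superharmonic in ℝ^N₊). -/

import Mathlib

noncomputable section
open Real Set

/-- The differential expression `E_{p,N,k}[f](θ)` whose sign coincides with the sign of the
`p`-Laplacian of the quasiradial function `u(r,θ) = r^k · f(θ)` in the upper half-space. -/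
def Ecal (p : ℝ) (N : ℕ) (k : ℝ) (f : ℝ → ℝ) (θ : ℝ) : ℝ :=
  ((p - 1) * (deriv f θ) ^ 2 + k ^ 2 * (f θ) ^ 2) * deriv (deriv f) θ
    + k * ((2 * p - 3) * k + (N : ℝ) - p) * f θ * (deriv f θ) ^ 2
    + k ^ 3 * (k * (p - 1) + (N : ℝ) - p) * (f θ) ^ 3
    + ((N : ℝ) - 2) * ((deriv f θ) ^ 2 + k ^ 2 * (f θ) ^ 2) * deriv f θ * Real.cot θ

/-!
For `f = cos` the expression factors as
`E = (k - 1) cos θ (A sin² θ + k² B cos² θ)` with `A = (2p-3)k + p + N - 3` and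
`B = (p-1)k + N - 1`, so on `(0, π/2)` its sign is decided by the signs of `k - 1`, `A` and `B`.
Each threshold on `k` fixes the sign of one of `A`, `B`, and the identity
`(2p-3) B = (p-1) A - (p-2)(p-N)` transfers that sign to the other one when `2 ≤ N ≤ p`.
-/

theorem Ecal_cos_eq (p : ℝ) (N : ℕ) (k : ℝ) {θ : ℝ} (hθ : sin θ ≠ 0) :
    Ecal p N k cos θ = (k - 1) * cos θ *
      (((2 * p - 3) * k + p + N - 3) * sin θ ^ 2 + k ^ 2 * ((p - 1) * k + N - 1) * cos θ ^ 2) := by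
  have hcos'' : deriv (deriv cos) θ = -cos θ := by simp [Real.deriv_cos']
  simp only [Ecal, hcos'']
  simp only [Real.deriv_cos', cot_eq_cos_div_sin]
  field_simp
  ring

section QuarterPeriod

variable {p : ℝ} {N : ℕ} {k θ : ℝ}

theorem Ecal_cos_nonneg_of_coeffs_nonpos (hk : k ≤ 1) (hA : (2 * p - 3) * k + p + N - 3 ≤ 0)
    (hB : (p - 1) * k + N - 1 ≤ 0) (hθ : θ ∈ Ioo 0 (π / 2)) : 0 ≤ Ecal p N k cos θ := by
  have hsin : 0 < sin θ := sin_pos_of_pos_of_lt_pi hθ.1 (by linarith [hθ.2, pi_pos])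
  have hcos : 0 < cos θ := cos_pos_of_mem_Ioo ⟨by linarith [hθ.1, pi_pos], hθ.2⟩
  rw [Ecal_cos_eq p N k hsin.ne']
  apply mul_nonneg_of_nonpos_of_nonpos (mul_nonpos_of_nonpos_of_nonneg (by linarith) hcos.le)
  exact add_nonpos (mul_nonpos_of_nonpos_of_nonneg hA (sq_nonneg _))
    (mul_nonpos_of_nonpos_of_nonneg (mul_nonpos_of_nonneg_of_nonpos (sq_nonneg k) hB) (sq_nonneg _))

theorem Ecal_cos_nonpos_of_coeffs_nonneg (hk : k ≤ 1) (hA : 0 ≤ (2 * p - 3) * k + p + N - 3)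
    (hB : 0 ≤ (p - 1) * k + N - 1) (hθ : θ ∈ Ioo 0 (π / 2)) : Ecal p N k cos θ ≤ 0 := by
  have hsin : 0 < sin θ := sin_pos_of_pos_of_lt_pi hθ.1 (by linarith [hθ.2, pi_pos])
  have hcos : 0 < cos θ := cos_pos_of_mem_Ioo ⟨by linarith [hθ.1, pi_pos], hθ.2⟩
  rw [Ecal_cos_eq p N k hsin.ne']
  apply mul_nonpos_of_nonpos_of_nonneg (mul_nonpos_of_nonpos_of_nonneg (by linarith) hcos.le)
  positivity

end QuarterPeriod

theorem Ecal_cos_sign_large_p_general (N : ℕ) (hN : 2 ≤ N) (p : ℝ)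
    (hp2 : (N : ℝ) ≤ p) (k : ℝ) :
    (k ≤ -((p + (N : ℝ) - 3) / (2 * p - 3)) →
      ∀ θ ∈ Ioo (0 : ℝ) (π / 2), 0 ≤ Ecal p N k Real.cos θ) ∧
    (k ∈ Ico (-(((N : ℝ) - 1) / (p - 1))) 0 →
      ∀ θ ∈ Ioo (0 : ℝ) (π / 2), Ecal p N k Real.cos θ ≤ 0) := by
  have hN' : (2 : ℝ) ≤ N := by exact_mod_cast hN
  have hpN : 0 ≤ (p - 2) * (p - N) := mul_nonneg (by linarith) (by linarith)
  have hcoeffs : (2 * p - 3) * ((p - 1) * k + N - 1)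
      = (p - 1) * ((2 * p - 3) * k + p + N - 3) - (p - 2) * (p - N) := by ring
  constructor
  · intro hk θ hθ
    rw [← neg_div, le_div_iff₀ (by linarith)] at hk
    have hA : (2 * p - 3) * k + p + N - 3 ≤ 0 := by linarith
    refine Ecal_cos_nonneg_of_coeffs_nonpos (by nlinarith) hA ?_ hθ
    nlinarith
  · rintro ⟨hk, hk0⟩ θ hθ
    rw [← neg_div, div_le_iff₀ (by linarith)] at hk
    have hB : 0 ≤ (p - 1) * k + N - 1 := by linarith
    refine Ecal_cos_nonpos_of_coeffs_nonneg (by linarith) ?_ hB hθ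
    nlinarith

/-- For `p ≥ N` (and `p > 1`): `u = r^k cos θ` is `p`-subharmonic for `k ≤ -(p+N-3)/(2p-3)`
and `p`-superharmonic for `k ∈ [-(N-1)/(p-1), 0)`. -/
theorem Ecal_cos_sign_large_p (N : ℕ) (hN : 2 ≤ N) (p : ℝ) (hp1 : 1 < p)
    (hp2 : (N : ℝ) ≤ p) (k : ℝ) :
    (k ≤ -((p + (N : ℝ) - 3) / (2 * p - 3)) →
      ∀ θ ∈ Ioo (0 : ℝ) (π / 2), 0 ≤ Ecal p N k Real.cos θ) ∧
    (k ∈ Ico (-(((N : ℝ) - 1) / (p - 1))) 0 →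
      ∀ θ ∈ Ioo (0 : ℝ) (π / 2), Ecal p N k Real.cos θ ≤ 0) :=
  Ecal_cos_sign_large_p_general N hN p hp2 k
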